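/- arXiv:2210.04768 — 2 statements merged into one kernel-verified Lean document; each statement's English description precedes it below -/
import Mathlib

section
/- Let X and Y be graphs on [n] with n ≥ 2, and let v be a vertex of X of degree 1 with unique neighbor u. Suppose that for every label l ∈ [n], the friends-and-strangers graph FS(X − v, Y − l) is connected, and suppose that for every l ∈ [n] there exists l' ≠ l with {l,l'} ∈ E(Y). Then FS(X,Y) is connected. -/
/-!
Bijections that agree at the pendant vertex `v` are joined by moves of `FS(X - v, Y - l)`, which
embeds into `FS(X, Y)`. The label sitting at `v` can be replaced by any friend `l'` of it: first
bring `l'` to the neighbour `u` without touching `v`, then swap along the edge `vu`. Since `Y` is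
connected (each `Y - l` is, and every label has a friend), this reaches every bijection.
-/

open SimpleGraph

/-- The friends-and-strangers graph of `X` and `Y`: vertices are bijections `σ : V ≃ W`,
and `σ, φ` are adjacent iff there is an edge `{a,b}` of `X` with `{σ a, σ b}` an edge of `Y`
such that `φ` is obtained from `σ` by swapping the values at `a` and `b`. -/
def FS {V W : Type*} [DecidableEq V] (X : SimpleGraph V) (Y : SimpleGraph W) : SimpleGraph (V ≃ W) :=
  SimpleGraph.fromRel (fun σ φ =>
    ∃ a b : V, X.Adj a b ∧ Y.Adj (σ a) (σ b) ∧ φ = (Equiv.swap a b).trans σ)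

/-- `m` is the first vertex (0-indexed) of one of the legs of the spider with leg
lengths `L`, i.e. `m` is the sum of a proper prefix of `L`. -/
def legStart (L : List ℕ) (m : ℕ) : Prop :=
  ∃ t : List ℕ, t <+: L ∧ t ≠ L ∧ t.sum = m

/-- The spider graph on `Fin n` (intended for `n = L.sum + 1`) with leg lengths given by the
list `L`: vertex `n-1` is the center, and the legs occupy consecutive blocks of vertices. -/
def Spider (n : ℕ) (L : List ℕ) : SimpleGraph (Fin n) :=
  SimpleGraph.fromRel (fun i j =>
    ((j : ℕ) = n - 1 ∧ legStart L (i : ℕ)) ∨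
    ((j : ℕ) = (i : ℕ) + 1 ∧ ¬ legStart L ((i : ℕ) + 1) ∧ (i : ℕ) + 1 < n - 1))

/-- The tadpole graph on `Fin n`: a cycle on vertices `0, …, c-1` together with the
path `c-1, c, …, n-1` (0-indexed version of: edges `{k,k+1}` plus `{1,c}`). -/
def Tadpole (n c : ℕ) : SimpleGraph (Fin n) :=
  SimpleGraph.fromRel (fun i j =>
    (j : ℕ) = (i : ℕ) + 1 ∨ ((i : ℕ) = 0 ∧ (j : ℕ) = c - 1))

/-- The path graph on `n` vertices. -/
def PathG (n : ℕ) : SimpleGraph (Fin n) :=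
  SimpleGraph.fromRel (fun i j => (j : ℕ) = (i : ℕ) + 1)

/-- The cycle graph on `n` vertices. -/
def CycleG (n : ℕ) : SimpleGraph (Fin n) :=
  SimpleGraph.fromRel (fun i j =>
    (j : ℕ) = (i : ℕ) + 1 ∨ ((i : ℕ) = 0 ∧ (j : ℕ) = n - 1))

namespace FS

variable {V W : Type*} [DecidableEq V] {X : SimpleGraph V} {Y : SimpleGraph W}

theorem adj_iff {σ φ : V ≃ W} :
    (FS X Y).Adj σ φ ↔ ∃ a b, X.Adj a b ∧ Y.Adj (σ a) (σ b) ∧ φ = (Equiv.swap a b).trans σ := by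
  refine ⟨?_, fun h => ⟨?_, Or.inl h⟩⟩
  · rintro ⟨-, h | ⟨a, b, hX, hY, rfl⟩⟩
    · exact h
    · refine ⟨a, b, hX, by simpa using hY.symm, ?_⟩
      ext x
      simp
  · obtain ⟨a, b, -, hY, rfl⟩ := h
    intro hσ
    exact hY.ne (by simpa using (congrArg (· b) hσ).symm)

theorem reachable_apply_of_reachable {σ φ : V ≃ W} (h : (FS X Y).Reachable σ φ) (x : V) :
    Y.Reachable (σ x) (φ x) := by
  obtain ⟨p⟩ := h
  induction p with
  | nil => rfl
  | cons hadj _ ih =>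
    obtain ⟨a, b, -, hY, rfl⟩ := adj_iff.mp hadj
    refine Reachable.trans ?_ ih
    rcases eq_or_ne x a with rfl | hxa
    · simpa using hY.reachable
    rcases eq_or_ne x b with rfl | hxb
    · simpa using hY.symm.reachable
    · simp [Equiv.swap_apply_of_ne_of_ne hxa hxb]

theorem preconnected_of_connected [DecidableEq W] (h : (FS X Y).Connected) : Y.Preconnected := by
  intro w₁ w₂
  obtain ⟨σ⟩ := h.nonempty
  simpa using reachable_apply_of_reachable (h.preconnected σ (σ.trans (Equiv.swap w₁ w₂)))
    (σ.symm w₁)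

end FS

section ExtendNe

variable {V W : Type*} [DecidableEq V] [DecidableEq W]

/-- The bijection `V ≃ W` sending `v` to `l` and agreeing with `e` elsewhere. -/
def extendNe (v : V) (l : W) (e : {w | w ≠ v} ≃ {w | w ≠ l}) : V ≃ W :=
  (Equiv.optionSubtypeNe v).symm.trans (e.optionCongr.trans (Equiv.optionSubtypeNe l))

variable {v : V} {l : W} (e : {w | w ≠ v} ≃ {w | w ≠ l})

@[simp]
theorem extendNe_apply_self : extendNe v l e v = l := by
  simp only [extendNe, Equiv.trans_apply, Equiv.optionSubtypeNe_symm_self, Equiv.optionCongr_apply,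
    Option.map_none]
  rfl

@[simp]
theorem extendNe_apply_coe (x : {w | w ≠ v}) : extendNe v l e x = e x := by
  simp only [extendNe, Equiv.trans_apply, Equiv.optionSubtypeNe_symm_of_ne x.2, Equiv.optionCongr_apply,
    Option.map_some]
  rfl

theorem extendNe_swap_trans (a b : {w | w ≠ v}) :
    extendNe v l ((Equiv.swap a b).trans e) = (Equiv.swap (a : V) b).trans (extendNe v l e) := by
  ext x
  rcases eq_or_ne x v with rfl | hx
  · simp [Equiv.swap_apply_of_ne_of_ne a.2.symm b.2.symm]
  · lift x to {w | w ≠ v} using hx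
    simp [← Subtype.val_injective.map_swap]

theorem exists_extendNe_eq {σ : V ≃ W} (h : σ v = l) : ∃ e, extendNe v l e = σ :=
  ⟨σ.subtypeEquiv fun x => by simp [← h], by
    ext x
    rcases eq_or_ne x v with rfl | hx
    · simp [h]
    · lift x to {w | w ≠ v} using hx
      simp⟩

end ExtendNe

namespace FS

variable {V W : Type*} [DecidableEq V] [DecidableEq W] {X : SimpleGraph V} {Y : SimpleGraph W}

def extendNeHom (v : V) (l : W) :
    FS (X.induce {w | w ≠ v}) (Y.induce {w | w ≠ l}) →g FS X Y where
  toFun := extendNe v l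
  map_rel' {e f} h := by
    obtain ⟨a, b, hX, hY, rfl⟩ := adj_iff.mp h
    exact adj_iff.mpr ⟨a, b, hX, by simpa using hY, extendNe_swap_trans e a b⟩

theorem reachable_of_apply_eq {v : V} {l : W}
    (hind : (FS (X.induce {w | w ≠ v}) (Y.induce {w | w ≠ l})).Preconnected)
    {σ τ : V ≃ W} (hσ : σ v = l) (hτ : τ v = l) : (FS X Y).Reachable σ τ := by
  obtain ⟨e, rfl⟩ := exists_extendNe_eq hσ
  obtain ⟨f, rfl⟩ := exists_extendNe_eq hτ
  exact (hind e f).map (extendNeHom v l)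

variable {v u : V} (huv : X.Adj v u)
  (hind : ∀ l, (FS (X.induce {w | w ≠ v}) (Y.induce {w | w ≠ l})).Preconnected)
include huv hind

theorem reachable_of_adj_apply {σ τ : V ≃ W} (h : Y.Adj (σ v) (τ v)) :
    (FS X Y).Reachable σ τ := by
  set σ' := σ.trans (Equiv.swap (σ u) (τ v))
  have hσ'v : σ' v = σ v :=
    Equiv.swap_apply_of_ne_of_ne (σ.injective.ne huv.ne) h.ne
  have hσ'u : σ' u = τ v := by simp [σ']
  have hadj : (FS X Y).Adj σ' ((Equiv.swap v u).trans σ') :=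
    adj_iff.mpr ⟨v, u, huv, by rwa [hσ'v, hσ'u], rfl⟩
  refine (reachable_of_apply_eq (hind _) rfl hσ'v).trans
    (hadj.reachable.trans (reachable_of_apply_eq (hind (τ v)) ?_ rfl))
  simp [hσ'u]

theorem preconnected_of_adj (hY : Y.Preconnected) : (FS X Y).Preconnected := by
  suffices ∀ {l m} (p : Y.Walk l m) (σ τ : V ≃ W), σ v = l → τ v = m → (FS X Y).Reachable σ τ from
    fun σ τ => this (hY (σ v) (τ v)).some σ τ rfl rfl
  intro l m p
  induction p with
  | nil => exact fun σ τ hσ hτ => reachable_of_apply_eq (hind _) hσ hτ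
  | @cons l l' m hadj p ih =>
    intro σ τ hσ hτ
    let ρ := σ.trans (Equiv.swap l l')
    have hρ : ρ v = l' := by simp [ρ, hσ]
    exact (reachable_of_adj_apply huv hind (by rwa [hσ, hρ])).trans (ih ρ τ hρ hτ)

end FS

theorem SimpleGraph.preconnected_of_preconnected_induce_ne {W : Type*} {Y : SimpleGraph W}
    (h : ∀ l, (Y.induce {w | w ≠ l}).Preconnected) (hY : ∀ l, ∃ l', Y.Adj l l') :
    Y.Preconnected := by
  intro y₁ y₂
  obtain ⟨l, hl⟩ := hY y₁
  rcases eq_or_ne l y₂ with rfl | hl₂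
  · exact hl.reachable
  · exact (h l ⟨y₁, hl.ne⟩ ⟨y₂, hl₂.symm⟩).map (Embedding.induce _).toHom

theorem stmt14_general (n : ℕ) (X Y : SimpleGraph (Fin n)) (v u : Fin n)
    (hv : X.neighborSet v = {u})
    (hind : ∀ l : Fin n,
      (FS (X.induce {w | w ≠ v}) (Y.induce {w | w ≠ l})).Connected)
    (hY : ∀ l : Fin n, ∃ l', Y.Adj l l') :
    (FS X Y).Connected := by
  have huv : X.Adj v u := by simp [← mem_neighborSet, hv]
  have hYpre : Y.Preconnected := preconnected_of_preconnected_induce_ne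
    (fun l => FS.preconnected_of_connected (hind l)) hY
  exact ⟨FS.preconnected_of_adj huv (fun l => (hind l).preconnected) hYpre⟩

/-- Pendant-vertex lemma: if `v` has degree 1 in `X` with unique neighbor `u`, every
`FS(X - v, Y - l)` is connected, and every label has at least one friend in `Y`, then
`FS(X,Y)` is connected. -/
theorem stmt14 (n : ℕ) (hn : 2 ≤ n) (X Y : SimpleGraph (Fin n)) (v u : Fin n)
    (hv : X.neighborSet v = {u})
    (hind : ∀ l : Fin n,
      (FS (X.induce {w | w ≠ v}) (Y.induce {w | w ≠ l})).Connected)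
    (hY : ∀ l : Fin n, ∃ l', Y.Adj l l') :
    (FS X Y).Connected :=
  stmt14_general n X Y v u hv hind hY
end

section
/- Let k ≥ 3 and n = k+4. Let Y be the complement of one of the k-legged spiders Spider(2,2,2,1,…,1), Spider(3,2,1,…,1), or Spider(4,1,…,1) on [n], and let l be any label that is a foot of the spider adjacent to the center (i.e., a leg of length 1). Then the graph obtained from the complement of Y by deleting l and the center label n has all its edges forming a subgraph of a path on at most 6 of the remaining vertices; in particular, Y restricted to the remaining n−2 labels contains the complement of a cycle C_{n−2} as a subgraph (up to relabeling). -/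
open SimpleGraph

lemma legStart_cons (a : ℕ) (L : List ℕ) (m : ℕ) :
    legStart (a :: L) m ↔ m = 0 ∨ ∃ m', legStart L m' ∧ m = a + m' := by
  constructor
  · rintro ⟨t, ht, hne, rfl⟩
    cases t with
    | nil => exact Or.inl rfl
    | cons b t' =>
      rw [List.cons_prefix_cons] at ht
      obtain ⟨rfl, ht'⟩ := ht
      refine Or.inr ⟨t'.sum, ⟨t', ht', fun h => hne (by rw [h]), rfl⟩, by simp⟩
  · rintro (rfl | ⟨m', ⟨t, ht, hne, rfl⟩, rfl⟩)
    · exact ⟨[], List.nil_prefix, by simp, rfl⟩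
    · exact ⟨a :: t, List.cons_prefix_cons.mpr ⟨rfl, ht⟩, by simp [hne], by simp⟩

lemma legStart_replicate (t m : ℕ) : legStart (List.replicate t 1) m ↔ m < t := by
  induction t generalizing m with
  | zero =>
    simp only [List.replicate_zero]
    constructor
    · rintro ⟨s, hs, hne, rfl⟩
      exact absurd (List.prefix_nil.mp hs) hne
    · omega
  | succ n ih =>
    rw [List.replicate_succ, legStart_cons]
    constructor
    · rintro (rfl | ⟨m', hm', rfl⟩)
      · omega
      · have := (ih m').mp hm'; omega
    · intro h
      rcases Nat.eq_zero_or_pos m with rfl | hm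
      · exact Or.inl rfl
      · exact Or.inr ⟨m - 1, (ih _).mpr (by omega), by omega⟩

/-- Let `k ≥ 3`, `n = k+4`, and let `Y` be the complement of one of the `k`-legged spiders
`Spider(2,2,2,1,…,1)`, `Spider(3,2,1,…,1)` or `Spider(4,1,…,1)` on `[n]`. If the label `l`
is a foot adjacent to the center (the unique neighbor of `l` in the spider is the center
`n-1`), then the graph obtained from the spider (the complement of `Y`) by deleting `l` and
the center has all its edges lying on at most 6 vertices forming a subgraph of a path on 6
vertices; in particular `Y` restricted to the remaining `n-2` labels contains the complement
of a cycle `C_{n-2}` as a subgraph, up to relabeling. -/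
theorem stmt17 (k : ℕ) (hk : 3 ≤ k) (S : List ℕ)
    (hS : S = [2, 2, 2] ++ List.replicate (k - 3) 1 ∨
          S = [3, 2] ++ List.replicate (k - 2) 1 ∨
          S = [4] ++ List.replicate (k - 1) 1)
    (Y : SimpleGraph (Fin (k + 4))) (hY : Y = (Spider (k + 4) S)ᶜ)
    (l : Fin (k + 4)) (hl : ∀ w, (Spider (k + 4) S).Adj l w ↔ (w : ℕ) = k + 3) :
    (∃ f : {w : Fin (k + 4) // w ≠ l ∧ (w : ℕ) ≠ k + 3} → Fin 6,
      (∀ x y, ((Spider (k + 4) S).induce {w : Fin (k + 4) | w ≠ l ∧ (w : ℕ) ≠ k + 3}).Adj x y →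
        (PathG 6).Adj (f x) (f y)) ∧
      Set.InjOn f {x | ∃ y,
        ((Spider (k + 4) S).induce {w : Fin (k + 4) | w ≠ l ∧ (w : ℕ) ≠ k + 3}).Adj x y}) ∧
    (∃ e : Fin (k + 2) ≃ {w : Fin (k + 4) // w ≠ l ∧ (w : ℕ) ≠ k + 3},
      ∀ i j, (CycleG (k + 2))ᶜ.Adj i j →
        (Y.induce {w : Fin (k + 4) | w ≠ l ∧ (w : ℕ) ≠ k + 3}).Adj (e i) (e j)) := by
  subst hY
  -- the value of l is not the center
  have hll : (l : ℕ) ≠ k + 3 := fun h => (Spider (k + 4) S).irrefl ((hl l).mpr h)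
  have hlk : (l : ℕ) ≤ k + 2 := by have := l.isLt; omega
  -- characterization of edges of the spider away from the center
  have hedge : ∀ a b : Fin (k + 4), (Spider (k + 4) S).Adj a b → (a : ℕ) ≠ k + 3 →
      (b : ℕ) ≠ k + 3 → ∃ m : ℕ, ¬ legStart S (m + 1) ∧ m + 1 < k + 3 ∧
        (((a : ℕ) = m ∧ (b : ℕ) = m + 1) ∨ ((a : ℕ) = m + 1 ∧ (b : ℕ) = m)) := by
    intro a b hab ha hb
    rw [Spider, SimpleGraph.fromRel_adj] at hab
    obtain ⟨hne, hrel⟩ := hab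
    rcases hrel with (⟨h1, h2⟩ | ⟨h1, h2, h3⟩) | (⟨h1, h2⟩ | ⟨h1, h2, h3⟩)
    · omega
    · exact ⟨a, h2, by omega, Or.inl ⟨rfl, by omega⟩⟩
    · omega
    · exact ⟨b, h2, by omega, Or.inr ⟨by omega, rfl⟩⟩
  -- away from the center, non-leg-starts are at most 5
  have hbound : ∀ m : ℕ, 1 ≤ m → m < k + 3 → ¬ legStart S m → m < 6 := by
    intro m h1 h2 hn
    by_contra hb
    push_neg at hb
    apply hn
    rcases hS with rfl | rfl | rfl
    · exact (legStart_cons ..).mpr (Or.inr ⟨m - 2, (legStart_cons ..).mpr (Or.inr ⟨m - 4,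
        (legStart_cons ..).mpr (Or.inr ⟨m - 6, (legStart_replicate ..).mpr (by omega),
          by omega⟩), by omega⟩), by omega⟩)
    · exact (legStart_cons ..).mpr (Or.inr ⟨m - 3, (legStart_cons ..).mpr (Or.inr ⟨m - 5,
        (legStart_replicate ..).mpr (by omega), by omega⟩), by omega⟩)
    · exact (legStart_cons ..).mpr (Or.inr ⟨m - 4, (legStart_replicate ..).mpr (by omega),
        by omega⟩)
  constructor
  · -- part 1
    refine ⟨fun x => if h : (x.1 : ℕ) < 6 then ⟨(x.1 : ℕ), h⟩ else 0, ?_, ?_⟩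
    · intro x y hxy
      obtain ⟨m, hnl, hm3, hc⟩ := hedge x.1 y.1 hxy x.2.2 y.2.2
      have hm6 : m + 1 < 6 := hbound (m + 1) (by omega) hm3 hnl
      have hx6 : (x.1 : ℕ) < 6 := by omega
      have hy6 : (y.1 : ℕ) < 6 := by omega
      simp only [dif_pos hx6, dif_pos hy6]
      rw [PathG, SimpleGraph.fromRel_adj]
      refine ⟨?_, ?_⟩
      · intro h
        have := congrArg Fin.val h
        simp only [Fin.val_mk] at this
        omega
      · simp only [Fin.val_mk]
        omega
    · intro x hx y hy hfxy
      obtain ⟨zx, hzx⟩ := hx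
      obtain ⟨zy, hzy⟩ := hy
      obtain ⟨m, hnl, hm3, hc⟩ := hedge x.1 zx.1 hzx x.2.2 zx.2.2
      have hx6 : (x.1 : ℕ) < 6 := by
        have := hbound (m + 1) (by omega) hm3 hnl; omega
      obtain ⟨m', hnl', hm3', hc'⟩ := hedge y.1 zy.1 hzy y.2.2 zy.2.2
      have hy6 : (y.1 : ℕ) < 6 := by
        have := hbound (m' + 1) (by omega) hm3' hnl'; omega
      simp only [dif_pos hx6, dif_pos hy6] at hfxy
      simp only [Fin.mk.injEq] at hfxy
      exact Subtype.ext (Fin.ext hfxy)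
  · -- part 2
    refine ⟨⟨fun i => ⟨⟨if (i : ℕ) < (l : ℕ) then (i : ℕ) else (i : ℕ) + 1,
        by split <;> omega⟩, ?_, ?_⟩,
      fun w => ⟨if (w.1 : ℕ) < (l : ℕ) then (w.1 : ℕ) else (w.1 : ℕ) - 1, ?_⟩, ?_, ?_⟩, ?_⟩
    · intro h
      have := congrArg Fin.val h
      simp only [Fin.val_mk] at this
      have hi := (i : Fin (k + 2)).isLt
      split at this <;> omega
    · simp only [Fin.val_mk]
      have hi := (i : Fin (k + 2)).isLt
      split <;> omega
    · have h1 : (w.1 : ℕ) ≠ (l : ℕ) := fun h => w.2.1 (Fin.ext h)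
      have h2 : (w.1 : ℕ) ≠ k + 3 := w.2.2
      have h3 := w.1.isLt
      split <;> omega
    · intro i
      apply Fin.ext
      simp only [Fin.val_mk]
      split_ifs <;> omega
    · intro w
      apply Subtype.ext
      apply Fin.ext
      have h1 : (w.1 : ℕ) ≠ (l : ℕ) := fun h => w.2.1 (Fin.ext h)
      have h2 : (w.1 : ℕ) ≠ k + 3 := w.2.2
      have h3 := w.1.isLt
      simp only [Fin.val_mk]
      split_ifs <;> omega
    · intro i j hij
      rw [SimpleGraph.compl_adj] at hij
      obtain ⟨hij1, hij2⟩ := hij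
      have hvij : (i : ℕ) ≠ (j : ℕ) := fun h => hij1 (Fin.ext h)
      simp only [Equiv.coe_fn_mk, SimpleGraph.comap_adj, Function.Embedding.coe_subtype,
        SimpleGraph.compl_adj]
      refine ⟨?_, ?_⟩
      · intro h
        simp only [Subtype.mk.injEq, Fin.mk.injEq] at h
        split_ifs at h <;> omega
      · intro hadj
        obtain ⟨m, hnl, hm3, hc⟩ := hedge _ _ hadj (by simp only [Fin.val_mk]; split <;> omega)
          (by simp only [Fin.val_mk]; split <;> omega)
        simp only [Fin.val_mk] at hc
        apply hij2
        rw [CycleG, SimpleGraph.fromRel_adj]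
        refine ⟨hij1, ?_⟩
        have hgoal : ((j : ℕ) = (i : ℕ) + 1) ∨ ((i : ℕ) = (j : ℕ) + 1) := by
          split_ifs at hc <;> omega
        tauto
end
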